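/- arXiv:1706.06456 — 3 statements merged into one kernel-verified Lean document; each statement's English description precedes it below -/
import Mathlib

section
/- Let T be a triangulation of a convex polygon π with n vertices. If some vertex of π is incident to exactly e interior edges of T, then for every triangulation U of π one has d(T,U) ≤ 2n − 6 − e. -/
/-!
Combinatorial model of a convex polygon with `n` vertices, labeled by `Fin n`
in clockwise cyclic order.
-/

/-- `c` lies strictly inside the clockwise arc going from `a` to `b`. -/
def Between (n : ℕ) (a c b : Fin n) : Prop :=
  0 < (c - a).val ∧ (c - a).val < (b - a).val

/-- Two edges on the polygon cross: their endpoints strictly interleave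
in the clockwise cyclic order. -/
def Cross (n : ℕ) (e f : Finset (Fin n)) : Prop :=
  ∃ a b c d : Fin n, e = {a, b} ∧ f = {c, d} ∧ Between n a c b ∧ Between n b d a

/-- The vertex immediately following `i` clockwise. -/
def nextV (n : ℕ) (i : Fin n) : Fin n :=
  ⟨(i.val + 1) % n, Nat.mod_lt _ i.pos⟩

/-- Boundary edges of the polygon: the pairs of cyclically consecutive vertices. -/
def IsBoundary (n : ℕ) (e : Finset (Fin n)) : Prop :=
  ∃ i : Fin n, e = {i, nextV n i}

/-- `E` is a triangulation of the convex (sub)polygon on the vertex set `W`: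
an inclusion-maximal set of pairwise non-crossing edges on `W`. -/
def IsTriangulationOn (n : ℕ) (W : Finset (Fin n)) (E : Finset (Finset (Fin n))) : Prop :=
  (∀ e ∈ E, e ⊆ W) ∧ (∀ e ∈ E, e.card = 2) ∧
    (∀ e ∈ E, ∀ f ∈ E, ¬ Cross n e f) ∧
    (∀ e : Finset (Fin n), e ⊆ W → e.card = 2 → (∀ f ∈ E, ¬ Cross n e f) → e ∈ E)

/-- A triangulation of the convex polygon with `n` vertices. -/
structure Triangulation (n : ℕ) where
  edges : Finset (Finset (Fin n))
  isTri : IsTriangulationOn n Finset.univ edges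

theorem Triangulation.edges_injective (n : ℕ) :
    Function.Injective (Triangulation.edges (n := n)) := by
  rintro ⟨e, he⟩ ⟨f, hf⟩ h
  dsimp at h
  subst h
  rfl

/-- The flip-graph of the polygon: two triangulations are adjacent exactly when
they differ by a single edge. -/
def flipGraph (n : ℕ) : SimpleGraph (Triangulation n) where
  Adj T U := T ≠ U ∧ (T.edges \ U.edges).card = 1 ∧ (U.edges \ T.edges).card = 1
  symm := ⟨fun T U h => ⟨h.1.symm, h.2.2, h.2.1⟩⟩
  loopless := ⟨fun T h => h.1 rfl⟩

noncomputable instance (n : ℕ) : Fintype (Triangulation n) :=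
  Fintype.ofInjective Triangulation.edges (Triangulation.edges_injective n)

open Classical in
/-- The number of interior edges of `T` incident to the vertex `v`. -/
noncomputable def interiorDeg (n : ℕ) (T : Triangulation n) (v : Fin n) : ℕ :=
  (T.edges.filter fun e => v ∈ e ∧ ¬ IsBoundary n e).card

/-- `T` has an ear in `v`: no interior edge of `T` is incident to `v`. -/
def HasEar (n : ℕ) (T : Triangulation n) (v : Fin n) : Prop :=
  ∀ e ∈ T.edges, ¬ IsBoundary n e → v ∉ e

/-- The eccentricity of `T` in the flip-graph: the maximum of `d(T,U)` over all
triangulations `U`. -/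
noncomputable def eccentricity (n : ℕ) (T : Triangulation n) : ℕ :=
  Finset.univ.sup fun U : Triangulation n => (flipGraph n).dist T U

/-- The monotone relabeling of the vertices of the polygon after the deletion of
the vertex `a`. -/
def collapse (n : ℕ) (a v : Fin (n + 2)) : Fin (n + 1) :=
  ⟨if v.val < a.val then v.val else v.val - 1, by
    have := v.isLt; have := a.isLt; split <;> omega⟩

/-- The edge set of the triangulation `T∖a` obtained by deleting the vertex `a` from a
triangulation with edge set `E`: remove the boundary edge `{a, a+1}`, replace `a` by
`a+1` in every remaining edge, and relabel the remaining vertices monotonically. -/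
def deleteEdges (n : ℕ) (a : Fin (n + 2)) (E : Finset (Finset (Fin (n + 2)))) :
    Finset (Finset (Fin (n + 1))) :=
  (E.erase {a, a + 1}).image fun e =>
    e.image fun v => collapse n a (if v = a then a + 1 else v)

/-- `c` is an apex of a triangle of `X` on the boundary edge `{a,b}`. -/
def ApexOf (n : ℕ) (X : Triangulation n) (a b c : Fin n) : Prop :=
  c ≠ a ∧ c ≠ b ∧ ({a, c} : Finset (Fin n)) ∈ X.edges ∧ ({b, c} : Finset (Fin n)) ∈ X.edges

/-- The flip between the adjacent triangulations `X` and `Y` is incident to `{a,b}`: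
it affects the triangle containing `{a,b}`. -/
def FlipIncident (n : ℕ) (X Y : Triangulation n) (a b : Fin n) : Prop :=
  ∃ c : Fin n, (ApexOf n X a b c ∧ ¬ ApexOf n Y a b c) ∨
    (ApexOf n Y a b c ∧ ¬ ApexOf n X a b c)

open Classical in
/-- The number of flips incident to `{a,b}` along the walk `p` in the flip-graph. -/
noncomputable def flipsIncident {n : ℕ} {T U : Triangulation n}
    (p : (flipGraph n).Walk T U) (a b : Fin n) : ℕ :=
  (p.darts.filter fun d => decide (FlipIncident n d.toProd.1 d.toProd.2 a b)).length

open Classical in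
/-- `a 0, …, a (k-1)` is a shelling of `T` at `v`: an ordering of the vertices not
joined to `v` by an edge of `T` such that, for every `i`, the edges of `T` incident
to none of `a i, …, a (k-1)` form a triangulation of a convex polygon. -/
def IsShelling (n k : ℕ) (T : Triangulation n) (v : Fin n) (a : Fin k → Fin n) : Prop :=
  Function.Injective a ∧
    (∀ w : Fin n, (∃ i, a i = w) ↔ w ≠ v ∧ ({v, w} : Finset (Fin n)) ∉ T.edges) ∧
    ∀ i : Fin k,
      IsTriangulationOn n (Finset.univ.filter fun w => ∀ j, i ≤ j → w ≠ a j)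
        (T.edges.filter fun e => ∀ j, i ≤ j → a j ∉ e)

/-- `a i` is incident to at least two interior edges of `U` whose other vertex is not
among `a i, …, a (k-1)`. -/
def GoodAt (n k : ℕ) (U : Triangulation n) (a : Fin k → Fin n) (i : Fin k) : Prop :=
  ∃ e₁ e₂ : Finset (Fin n), e₁ ∈ U.edges ∧ e₂ ∈ U.edges ∧ e₁ ≠ e₂ ∧
    ¬ IsBoundary n e₁ ∧ ¬ IsBoundary n e₂ ∧ a i ∈ e₁ ∧ a i ∈ e₂ ∧
    (∀ w ∈ e₁, w ≠ a i → ∀ j, i ≤ j → w ≠ a j) ∧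
    (∀ w ∈ e₂, w ≠ a i → ∀ j, i ≤ j → w ≠ a j)

/-- The set `Ω(T,v)`: triangulations `U` with an ear in `v` such that, for some
shelling `a` of `T` at `v`, every `a i` is incident to at least two interior edges of
`U` whose other vertex is not among `a i, …, a (k-1)`. -/
def Omega (n k : ℕ) (T : Triangulation n) (v : Fin n) : Set (Triangulation n) :=
  {U | HasEar n U v ∧ ∃ a : Fin k → Fin n, IsShelling n k T v a ∧ ∀ i, GoodAt n k U a i}

/-- The set `Ω̃(T,a,b)`: triangulations `U` such that every interior edge shared by `T`
and `U` is incident to `a` or to `b`, and every vertex on the left of `(a,b)` is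
incident to at least two interior edges of `U`. -/
def OmegaTilde (n : ℕ) (T : Triangulation n) (a b : Fin n) : Set (Triangulation n) :=
  {U | (∀ e ∈ T.edges, e ∈ U.edges → ¬ IsBoundary n e → a ∈ e ∨ b ∈ e) ∧
    ∀ c : Fin n, Between n a c b → 2 ≤ interiorDeg n U c}

/-- `(a,b,c)` is a clockwise-oriented central triangle of `T`: the oriented edges
`(a,b)`, `(b,c)` and `(c,a)` have length at most `n/2` and `{a,b}`, `{b,c}`, `{a,c}`
are edges of `T`. -/
def CentralTriangle (n : ℕ) (T : Triangulation n) (a b c : Fin n) : Prop :=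
  2 * (b - a).val ≤ n ∧ 2 * (c - b).val ≤ n ∧ 2 * (a - c).val ≤ n ∧
    ({a, b} : Finset (Fin n)) ∈ T.edges ∧ ({b, c} : Finset (Fin n)) ∈ T.edges ∧
    ({a, c} : Finset (Fin n)) ∈ T.edges

/-!
Every triangulation can be flipped to the fan at `v` by flips that each add one edge at `v`:
if `w` is not joined to `v`, the neighbours `w₁, w₂` of `v` on either side of `w` span a triangle
`v w₁ w₂`, and flipping `{w₁, w₂}` joins `v` to the apex `u` of the triangle on its other side.
Hence `T` reaches the fan in `n - 3 - e` flips, `U` in at most `n - 3`, and the two walks give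
`d(T, U) ≤ 2n - 6 - e`.
-/

open Finset

theorem Finset.pair_eq_pair_iff {α : Type*} [DecidableEq α] {x y z w : α} :
    ({x, y} : Finset α) = {z, w} ↔ x = z ∧ y = w ∨ x = w ∧ y = z := by
  rw [← coe_inj, coe_pair, coe_pair, Set.pair_eq_pair_iff]

section Coordinates

variable {n : ℕ}

/-! Cyclic statements about vertices become linear arithmetic once every vertex `x` is
replaced by its coordinate `(x - o).val ∈ [0, n)` relative to a base vertex `o`. -/

theorem val_sub_eq_ite (o x y : Fin n) :
    (x - y).val = if (y - o).val ≤ (x - o).val then (x - o).val - (y - o).val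
      else n + (x - o).val - (y - o).val := by
  have : NeZero n := NeZero.of_pos o.pos
  rw [← sub_sub_sub_cancel_right x y o]
  split_ifs with h
  · exact Fin.sub_val_of_le h
  · exact Fin.coe_sub_iff_lt.mpr (by omega)

theorem eq_of_val_sub_eq (o : Fin n) {x y : Fin n} (h : (x - o).val = (y - o).val) : x = y :=
  have : NeZero n := NeZero.of_pos o.pos
  sub_left_injective (Fin.ext h)

theorem val_sub_self (o : Fin n) : (o - o).val = 0 := by
  have : NeZero n := NeZero.of_pos o.pos
  simp

theorem val_sub_ne (o : Fin n) {x y : Fin n} (h : x ≠ y) : (x - o).val ≠ (y - o).val :=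
  fun h' => h (eq_of_val_sub_eq o h')

theorem val_add_one_sub_of_lt [NeZero n] (o x : Fin n) (h : (x - o).val + 1 < n) :
    (x + 1 - o).val = (x - o).val + 1 := by
  have h' := val_sub_eq_ite o (x + 1) x
  rw [add_sub_cancel_left, Fin.val_one', Nat.mod_eq_of_lt (by omega)] at h'
  split_ifs at h' <;> omega

theorem between_iff (o a c b : Fin n) :
    Between n a c b ↔ ((a - o).val < (c - o).val ∧ (c - o).val < (b - o).val) ∨
      ((b - o).val < (a - o).val ∧ ((a - o).val < (c - o).val ∨ (c - o).val < (b - o).val)) := by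
  rw [Between, val_sub_eq_ite o c a, val_sub_eq_ite o b a]
  split_ifs <;> omega

theorem cross_pair_iff (p q r s : Fin n) :
    Cross n {p, q} {r, s} ↔
      (Between n p r q ∧ Between n q s p) ∨ (Between n p s q ∧ Between n q r p) := by
  constructor
  · rintro ⟨a, b, c, d, hab, hcd, hc, hd⟩
    rcases pair_eq_pair_iff.mp hab with ⟨rfl, rfl⟩ | ⟨rfl, rfl⟩ <;>
      rcases pair_eq_pair_iff.mp hcd with ⟨rfl, rfl⟩ | ⟨rfl, rfl⟩ <;> tauto
  · rintro (⟨hr, hs⟩ | ⟨hs, hr⟩)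
    · exact ⟨p, q, r, s, rfl, rfl, hr, hs⟩
    · exact ⟨p, q, s, r, rfl, pair_comm r s, hs, hr⟩

theorem Cross.exists_eq_pair_left {e f : Finset (Fin n)} (h : Cross n e f) :
    ∃ p q, e = {p, q} := by
  obtain ⟨p, q, -, -, rfl, -⟩ := h
  exact ⟨p, q, rfl⟩

theorem Cross.exists_eq_pair_right {e f : Finset (Fin n)} (h : Cross n e f) :
    ∃ r s, f = {r, s} := by
  obtain ⟨-, -, r, s, -, rfl, -⟩ := h
  exact ⟨r, s, rfl⟩

theorem Cross.symm {e f : Finset (Fin n)} (h : Cross n e f) : Cross n f e := by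
  obtain ⟨p, q, rfl⟩ := Cross.exists_eq_pair_left h
  obtain ⟨r, s, rfl⟩ := Cross.exists_eq_pair_right h
  simp only [cross_pair_iff, between_iff p] at h ⊢
  have := val_sub_self p
  omega

theorem not_cross_of_mem {e f : Finset (Fin n)} {v : Fin n} (he : v ∈ e) (hf : v ∈ f) :
    ¬ Cross n e f := by
  rintro ⟨a, b, c, d, rfl, rfl, hc, hd⟩
  simp only [mem_insert, mem_singleton] at he hf
  rw [between_iff a] at hc hd
  rcases he with rfl | rfl <;> rcases hf with rfl | rfl <;> omega

theorem isBoundary_iff [NeZero n] {e : Finset (Fin n)} :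
    IsBoundary n e ↔ ∃ i : Fin n, e = {i, i + 1} := by
  have nextV_eq (i : Fin n) : nextV n i = i + 1 := by
    ext
    rw [Fin.val_add, Fin.val_one', Nat.add_mod_mod]
    rfl
  simp only [IsBoundary, nextV_eq]

theorem not_cross_of_isBoundary (hn : 2 ≤ n) {e f : Finset (Fin n)} (he : IsBoundary n e) :
    ¬ Cross n e f := by
  have : NeZero n := ⟨by omega⟩
  obtain ⟨i, rfl⟩ := isBoundary_iff.mp he
  intro h
  obtain ⟨r, s, rfl⟩ := Cross.exists_eq_pair_right h
  simp only [cross_pair_iff, between_iff i] at h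
  have := val_sub_self i
  have := val_add_one_sub_of_lt i i (by omega)
  omega

end Coordinates

section Triangulations

variable {n : ℕ} {E : Finset (Finset (Fin n))}

theorem IsTriangulationOn.eq_of_subset {W : Finset (Fin n)} {F : Finset (Finset (Fin n))}
    (hE : IsTriangulationOn n W E) (hF : IsTriangulationOn n W F) (h : E ⊆ F) : E = F :=
  h.antisymm fun f hf => hE.2.2.2 f (hF.1 f hf) (hF.2.1 f hf) fun e he => hF.2.2.1 f hf e (h he)

theorem IsTriangulationOn.mem_of_forall_not_cross (hE : IsTriangulationOn n univ E)
    {e : Finset (Fin n)} (he : e.card = 2) (h : ∀ f ∈ E, ¬ Cross n e f) : e ∈ E :=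
  hE.2.2.2 e (subset_univ e) he h

theorem IsTriangulationOn.not_cross (hE : IsTriangulationOn n univ E) {e f : Finset (Fin n)}
    (he : e ∈ E) (hf : f ∈ E) : ¬ Cross n e f :=
  hE.2.2.1 e he f hf

theorem IsTriangulationOn.ne_of_pair_mem (hE : IsTriangulationOn n univ E) {a b : Fin n}
    (h : {a, b} ∈ E) : a ≠ b := by
  rintro rfl
  simpa using hE.2.1 _ h

theorem add_one_ne_self [NeZero n] (hn : 2 ≤ n) (i : Fin n) : i + 1 ≠ i := by
  intro h
  have := val_sub_self i
  have := val_add_one_sub_of_lt i i (by omega)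
  rw [h] at this
  omega

theorem IsTriangulationOn.mem_of_isBoundary (hE : IsTriangulationOn n univ E) (hn : 2 ≤ n)
    {e : Finset (Fin n)} (he : IsBoundary n e) : e ∈ E := by
  have : NeZero n := ⟨by omega⟩
  refine hE.mem_of_forall_not_cross ?_ fun f _ => not_cross_of_isBoundary hn he
  obtain ⟨i, rfl⟩ := isBoundary_iff.mp he
  exact card_pair (add_one_ne_self hn i).symm

open Classical in
noncomputable def fanEdges (v : Fin n) : Finset (Finset (Fin n)) :=
  univ.filter fun e => e.card = 2 ∧ (v ∈ e ∨ IsBoundary n e)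

theorem mem_fanEdges {v : Fin n} {e : Finset (Fin n)} :
    e ∈ fanEdges v ↔ e.card = 2 ∧ (v ∈ e ∨ IsBoundary n e) := by
  simp [fanEdges]

theorem isTriangulationOn_fanEdges (hn : 2 ≤ n) (v : Fin n) :
    IsTriangulationOn n univ (fanEdges v) := by
  have : NeZero n := ⟨by omega⟩
  refine ⟨fun e _ => subset_univ e, fun e he => (mem_fanEdges.mp he).1, ?_, ?_⟩
  · intro e he f hf
    rcases (mem_fanEdges.mp he).2, (mem_fanEdges.mp hf).2 with ⟨hve | hbe, hvf | hbf⟩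
    · exact not_cross_of_mem hve hvf
    · exact fun h => not_cross_of_isBoundary hn hbf h.symm
    all_goals exact not_cross_of_isBoundary hn hbe
  · rintro e - he hnc
    refine mem_fanEdges.mpr ⟨he, ?_⟩
    by_contra! hcon
    obtain ⟨a, b, hab, rfl⟩ := card_eq_two.mp he
    wlog hlt : (a - v).val < (b - v).val generalizing a b
    · rw [pair_comm] at he hnc hcon
      exact this b a hab.symm he hnc hcon (by have := val_sub_ne v hab; omega)
    obtain ⟨hv, hba⟩ := hcon
    simp only [mem_insert, mem_singleton, not_or] at hv
    have hb : b ≠ a + 1 := fun h => hba (isBoundary_iff.mpr ⟨a, by rw [h]⟩)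
    have := val_sub_ne v hv.1
    have := val_sub_ne v hb
    have := val_sub_self v
    have := val_add_one_sub_of_lt v a (by omega)
    -- the fan edge from `v` to the successor of `a` crosses `{a, b}`
    refine hnc {v, a + 1} (mem_fanEdges.mpr ⟨card_pair ?_, Or.inl (mem_insert_self _ _)⟩) ?_
    · exact ne_of_apply_ne (fun x => (x - v).val) (by omega)
    · simp only [cross_pair_iff, between_iff v]
      omega

noncomputable def Triangulation.fan (hn : 2 ≤ n) (v : Fin n) : Triangulation n :=
  ⟨fanEdges v, isTriangulationOn_fanEdges hn v⟩

end Triangulations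

section Flips

variable {n : ℕ} {E : Finset (Finset (Fin n))}

theorem Between.ne_right {a c b : Fin n} (h : Between n a c b) : c ≠ b := by
  rintro rfl
  exact lt_irrefl _ h.2

theorem IsTriangulationOn.exists_last_neighbor [NeZero n] (hE : IsTriangulationOn n univ E)
    (hn : 2 ≤ n) {a b : Fin n} (h : Between n a (a + 1) b) :
    ∃ c, {a, c} ∈ E ∧ Between n a c b ∧ ∀ x, Between n c x b → {a, x} ∉ E := by
  classical
  have ha : {a, a + 1} ∈ E := hE.mem_of_isBoundary hn (isBoundary_iff.mpr ⟨a, rfl⟩)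
  obtain ⟨c, hc, hmax⟩ := (univ.filter fun x => Between n a x b ∧ {a, x} ∈ E).exists_max_image
    (fun x => (x - a).val) ⟨a + 1, by simp [h, ha]⟩
  simp only [mem_filter, mem_univ, true_and, and_imp] at hc hmax
  refine ⟨c, hc.2, hc.1, fun x hx hax => ?_⟩
  have := val_sub_self a
  have hcb := hc.1
  simp only [between_iff a] at hcb hx
  have hxb : Between n a x b := by
    rw [between_iff a]
    omega
  have := hmax x hxb hax
  omega

theorem IsTriangulationOn.pair_mem_of_last_neighbor (hE : IsTriangulationOn n univ E)
    {a b c : Fin n} (hab : {a, b} ∈ E) (hac : {a, c} ∈ E) (hc : Between n a c b)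
    (hlast : ∀ x, Between n c x b → {a, x} ∉ E) : {c, b} ∈ E := by
  refine hE.mem_of_forall_not_cross (card_pair hc.ne_right) fun f hf hcross => ?_
  obtain ⟨r, s, rfl⟩ := Cross.exists_eq_pair_right hcross
  wlog hrs : Between n c r b ∧ Between n b s c generalizing r s
  · rw [pair_comm r s] at hf hcross
    refine this s r hf hcross ?_
    rw [cross_pair_iff] at hcross
    tauto
  obtain ⟨hr, hs⟩ := hrs
  rcases eq_or_ne s a with rfl | hsa
  · exact hlast r hr (by rwa [pair_comm])
  have := val_sub_ne a hsa
  have := val_sub_self a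
  simp only [between_iff a] at hc hr hs
  -- otherwise `{r, s}` crosses `{a, c}` or `{a, b}`
  rcases Nat.lt_or_gt_of_ne (show (s - a).val ≠ (c - a).val by omega) with h | h
  · exact hE.not_cross hac hf (by simp only [cross_pair_iff, between_iff a]; omega)
  · exact hE.not_cross hab hf (by simp only [cross_pair_iff, between_iff a]; omega)

theorem eq_of_cross_of_not_cross_sides {a b c d : Fin n} (hb : Between n a b c)
    (hd : Between n c d a) {e : Finset (Fin n)} (h : Cross n {a, c} e)
    (hab : ¬ Cross n e {a, b}) (hbc : ¬ Cross n e {b, c}) (hcd : ¬ Cross n e {c, d})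
    (hda : ¬ Cross n e {d, a}) : e = {b, d} := by
  obtain ⟨r, s, rfl⟩ := Cross.exists_eq_pair_right h
  wlog hrs : Between n a r c ∧ Between n c s a generalizing r s
  · rw [pair_comm r s] at *
    refine this s r h hab hbc hcd hda ?_
    rw [cross_pair_iff] at h
    tauto
  obtain ⟨hr, hs⟩ := hrs
  have := val_sub_self a
  simp only [between_iff a] at hb hd hr hs
  have hrb : r = b := by
    refine eq_of_val_sub_eq a (le_antisymm ?_ ?_) <;> by_contra! hlt
    · exact hbc (by simp only [cross_pair_iff, between_iff a]; omega)
    · exact hab (by simp only [cross_pair_iff, between_iff a]; omega)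
  have hsd : s = d := by
    refine eq_of_val_sub_eq a (le_antisymm ?_ ?_) <;> by_contra! hlt
    · exact hda (by simp only [cross_pair_iff, between_iff a]; omega)
    · exact hcd (by simp only [cross_pair_iff, between_iff a]; omega)
  rw [hrb, hsd]

theorem IsTriangulationOn.flip (hE : IsTriangulationOn n univ E) {a b c d : Fin n}
    (hb : Between n a b c) (hd : Between n c d a) (hab : {a, b} ∈ E) (hbc : {b, c} ∈ E)
    (hcd : {c, d} ∈ E) (hda : {d, a} ∈ E) :
    IsTriangulationOn n univ (insert {b, d} (E.erase {a, c})) := by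
  have hcross : Cross n {a, c} {b, d} := (cross_pair_iff a c b d).mpr (Or.inl ⟨hb, hd⟩)
  have := val_sub_self a
  have hc : Between n b c d := by simp only [between_iff a] at *; omega
  have ha : Between n d a b := by simp only [between_iff a] at *; omega
  have only_ac : ∀ f ∈ E, Cross n {b, d} f → f = {a, c} := fun f hf h =>
    (eq_of_cross_of_not_cross_sides hc ha h (hE.not_cross hf hbc) (hE.not_cross hf hcd)
      (hE.not_cross hf hda) (hE.not_cross hf hab)).trans (pair_comm c a)
  have mem : ∀ f ∈ E, ¬ Cross n f {b, d} → f ∈ insert {b, d} (E.erase {a, c}) :=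
    fun f hf h => mem_insert_of_mem (mem_erase.mpr ⟨fun h' => h (h' ▸ hcross), hf⟩)
  have side (f : Finset (Fin n)) (hf : f ∈ E) (x : Fin n) (hxf : x ∈ f)
      (hx : x ∈ ({b, d} : Finset (Fin n))) : f ∈ insert {b, d} (E.erase {a, c}) :=
    mem f hf (not_cross_of_mem hxf hx)
  refine ⟨fun e _ => subset_univ e, ?_, ?_, ?_⟩
  · intro e he
    rcases mem_insert.mp he with rfl | he
    · refine card_pair (ne_of_apply_ne (fun x => (x - a).val) ?_)
      simp only [between_iff a] at hb hd
      omega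
    · exact hE.2.1 e (mem_of_mem_erase he)
  · intro e he f hf
    rcases mem_insert.mp he with rfl | he <;> rcases mem_insert.mp hf with rfl | hf
    · exact not_cross_of_mem (mem_insert_self b _) (mem_insert_self b _)
    · exact fun h => (mem_erase.mp hf).1 (only_ac f (mem_of_mem_erase hf) h)
    · exact fun h => (mem_erase.mp he).1 (only_ac e (mem_of_mem_erase he) h.symm)
    · exact hE.not_cross (mem_of_mem_erase he) (mem_of_mem_erase hf)
  · intro g _ hg hnc
    by_cases hgac : Cross n {a, c} g
    · rw [eq_of_cross_of_not_cross_sides hb hd hgac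
        (hnc _ (side _ hab b (by simp) (by simp))) (hnc _ (side _ hbc b (by simp) (by simp)))
        (hnc _ (side _ hcd d (by simp) (by simp))) (hnc _ (side _ hda d (by simp) (by simp)))]
      exact mem_insert_self _ _
    · have hgE : g ∈ E := hE.mem_of_forall_not_cross hg fun f hf => by
        by_cases hfac : f = {a, c}
        · exact hfac ▸ fun h => hgac h.symm
        · exact hnc f (mem_insert_of_mem (mem_erase.mpr ⟨hfac, hf⟩))
      exact mem g hgE (hnc _ (mem_insert_self _ _))

end Flips

section Fan

variable {n : ℕ}

open Classical in
noncomputable def nonNeighbors (T : Triangulation n) (v : Fin n) : Finset (Fin n) :=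
  univ.filter fun w => w ≠ v ∧ {v, w} ∉ T.edges

theorem mem_nonNeighbors {T : Triangulation n} {v w : Fin n} :
    w ∈ nonNeighbors T v ↔ w ≠ v ∧ {v, w} ∉ T.edges := by
  simp [nonNeighbors]

theorem flipGraph_adj_of_edges_eq {T T' : Triangulation n} {f g : Finset (Fin n)}
    (hf : f ∈ T.edges) (hg : g ∉ T.edges) (h : T'.edges = insert g (T.edges.erase f)) :
    (flipGraph n).Adj T T' := by
  refine ⟨fun hT => hg (hT ▸ h ▸ mem_insert_self g _), ?_, ?_⟩ <;> rw [h, card_eq_one]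
  · exact ⟨f, by ext x; aesop⟩
  · exact ⟨g, by ext x; aesop⟩

theorem IsTriangulationOn.exists_neighbors_around [NeZero n] {E : Finset (Finset (Fin n))}
    (hE : IsTriangulationOn n univ E) (hn : 2 ≤ n) {v w : Fin n} (hwv : w ≠ v)
    (hvw : {v, w} ∉ E) :
    ∃ w₁ w₂, {v, w₁} ∈ E ∧ {w₁, w₂} ∈ E ∧ {w₂, v} ∈ E ∧ Between n v w₁ w ∧ Between n w w₂ v := by
  have h0 := val_sub_self v
  have hv1 := val_add_one_sub_of_lt v v (by omega)
  have hw0 := val_sub_ne v hwv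
  have hw1 := val_sub_ne v fun h : w = v + 1 =>
    hvw (h ▸ hE.mem_of_isBoundary hn (isBoundary_iff.mpr ⟨v, rfl⟩))
  obtain ⟨w₁, hvw₁, hw₁, hlast₁⟩ := hE.exists_last_neighbor hn (a := v) (b := w) (by
    rw [between_iff v]
    omega)
  have hw₁' : 0 < (w₁ - v).val ∧ (w₁ - v).val < (w - v).val := by
    rw [between_iff v] at hw₁
    omega
  have hw₁1 := val_add_one_sub_of_lt v w₁ (by omega)
  obtain ⟨w₂, hw₁w₂, hw₂, hlast₂⟩ := hE.exists_last_neighbor hn (a := w₁) (b := v) (by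
    rw [between_iff v]
    omega)
  have hw₂v : {w₂, v} ∈ E := hE.pair_mem_of_last_neighbor (by rwa [pair_comm]) hw₁w₂ hw₂ hlast₂
  refine ⟨w₁, w₂, hvw₁, hw₁w₂, hw₂v, hw₁, ?_⟩
  -- `w₂` is a neighbour of `v` after `w₁`, hence not before `w` by the choice of `w₁`
  have := val_sub_ne v fun h : w₂ = w => hvw (by rwa [pair_comm, ← h])
  rw [between_iff v] at hw₂ ⊢
  by_contra! hle
  exact hlast₁ w₂ (by rw [between_iff v]; omega) (by rwa [pair_comm])

theorem exists_adj_nonNeighbors_eq_erase (hn : 2 ≤ n) (T : Triangulation n) {v w : Fin n}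
    (hw : w ∈ nonNeighbors T v) :
    ∃ T' u, (flipGraph n).Adj T T' ∧ u ∈ nonNeighbors T v ∧
      nonNeighbors T' v = (nonNeighbors T v).erase u := by
  have : NeZero n := ⟨by omega⟩
  have hE := T.isTri
  obtain ⟨hwv, hvw⟩ := mem_nonNeighbors.mp hw
  obtain ⟨w₁, w₂, hvw₁, hw₁w₂, hw₂v, hw₁, hw₂⟩ := hE.exists_neighbors_around hn hwv hvw
  have h0 := val_sub_self v
  replace hw₁ : 0 < (w₁ - v).val ∧ (w₁ - v).val < (w - v).val := by
    rw [between_iff v] at hw₁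
    omega
  replace hw₂ : (w - v).val < (w₂ - v).val := by
    rw [between_iff v] at hw₂
    omega
  have hw₁1 := val_add_one_sub_of_lt v w₁ (by omega)
  obtain ⟨u, hw₁u, hu, hlast⟩ := hE.exists_last_neighbor hn (a := w₁) (b := w₂) (by
    rw [between_iff v]
    omega)
  have huw₂ := hE.pair_mem_of_last_neighbor hw₁w₂ hw₁u hu hlast
  replace hu : (w₁ - v).val < (u - v).val ∧ (u - v).val < (w₂ - v).val := by
    rw [between_iff v] at hu
    omega
  have hvu : {v, u} ∉ T.edges := fun h =>
    hE.not_cross hw₁w₂ h (by simp only [cross_pair_iff, between_iff v]; omega)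
  have hflip := hE.flip (a := w₂) (b := v) (c := w₁) (d := u)
    (by rw [between_iff v]; omega) (by rw [between_iff v]; omega) hw₂v hvw₁ hw₁u huw₂
  have huv : u ≠ v := ne_of_apply_ne (fun x => (x - v).val) (by omega)
  refine ⟨⟨_, hflip⟩, u, flipGraph_adj_of_edges_eq (by rwa [pair_comm]) hvu rfl,
    mem_nonNeighbors.mpr ⟨huv, hvu⟩, ?_⟩
  have hv₁ : v ≠ w₁ := ne_of_apply_ne (fun x => (x - v).val) (by omega)
  have hv₂ : v ≠ w₂ := ne_of_apply_ne (fun x => (x - v).val) (by omega)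
  ext x
  simp only [mem_nonNeighbors, mem_erase, mem_insert, ne_eq, pair_eq_pair_iff]
  tauto

theorem eq_fan_of_nonNeighbors_eq_empty (hn : 2 ≤ n) {T : Triangulation n} {v : Fin n}
    (h : nonNeighbors T v = ∅) : T = Triangulation.fan hn v := by
  have hv (w : Fin n) (hw : w ≠ v) : {v, w} ∈ T.edges := by
    by_contra hvw
    simpa [h] using mem_nonNeighbors.mpr ⟨hw, hvw⟩
  refine Triangulation.edges_injective n
    ((isTriangulationOn_fanEdges hn v).eq_of_subset T.isTri fun e he => ?_).symm
  obtain ⟨he2, hve | hbe⟩ := mem_fanEdges.mp he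
  · obtain ⟨a, b, hab, rfl⟩ := card_eq_two.mp he2
    rcases mem_insert.mp hve with rfl | hvb
    · exact hv b hab.symm
    · rw [← mem_singleton.mp hvb, pair_comm]
      exact hv a (mem_singleton.mp hvb ▸ hab)
  · exact T.isTri.mem_of_isBoundary hn hbe

theorem exists_walk_to_fan (hn : 2 ≤ n) (v : Fin n) (T : Triangulation n) :
    ∃ p : (flipGraph n).Walk T (Triangulation.fan hn v), p.length ≤ #(nonNeighbors T v) := by
  induction hk : #(nonNeighbors T v) generalizing T with
  | zero =>
    rw [eq_fan_of_nonNeighbors_eq_empty hn (card_eq_zero.mp hk)]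
    exact ⟨.nil, le_rfl⟩
  | succ k ih =>
    obtain ⟨w, hw⟩ := card_pos.mp (by omega : 0 < #(nonNeighbors T v))
    obtain ⟨T', u, hadj, hu, hT'⟩ := exists_adj_nonNeighbors_eq_erase hn T hw
    obtain ⟨p, hp⟩ := ih T' (by rw [hT', card_erase_of_mem hu, hk, Nat.add_sub_cancel])
    exact ⟨.cons hadj p, by rw [SimpleGraph.Walk.length_cons]; omega⟩

theorem isBoundary_pair_iff [NeZero n] {v w : Fin n} :
    IsBoundary n {v, w} ↔ w = v + 1 ∨ w = v - 1 := by
  rw [isBoundary_iff]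
  constructor
  · rintro ⟨i, hi⟩
    rcases pair_eq_pair_iff.mp hi with ⟨rfl, rfl⟩ | ⟨rfl, rfl⟩
    · exact Or.inl rfl
    · exact Or.inr (add_sub_cancel_right w 1).symm
  · rintro (rfl | rfl)
    · exact ⟨v, rfl⟩
    · exact ⟨v - 1, by rw [sub_add_cancel, pair_comm]⟩

open Classical in
theorem interiorDeg_eq_card (T : Triangulation n) (v : Fin n) :
    interiorDeg n T v = #(univ.filter fun w => {v, w} ∈ T.edges ∧ ¬ IsBoundary n {v, w}) := by
  have hinj : Function.Injective fun w : Fin n => ({v, w} : Finset (Fin n)) := by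
    intro a b hab
    rcases pair_eq_pair_iff.mp hab with ⟨-, h⟩ | ⟨rfl, rfl⟩
    exacts [h, rfl]
  rw [interiorDeg, ← card_image_of_injective _ hinj]
  congr 1
  ext e
  simp only [mem_filter, mem_image, mem_univ, true_and]
  constructor
  · rintro ⟨he, hve, hbe⟩
    obtain ⟨a, b, hab, rfl⟩ := card_eq_two.mp (T.isTri.2.1 e he)
    rcases mem_insert.mp hve with rfl | hvb
    · exact ⟨b, ⟨he, hbe⟩, rfl⟩
    · rw [← mem_singleton.mp hvb, pair_comm] at he hbe ⊢
      exact ⟨a, ⟨he, hbe⟩, rfl⟩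
  · rintro ⟨w, ⟨he, hbe⟩, rfl⟩
    exact ⟨he, mem_insert_self v {w}, hbe⟩

theorem card_self_add_one_sub_one [NeZero n] (hn : 3 ≤ n) (v : Fin n) :
    #{v, v + 1, v - 1} = 3 := by
  have h0 := val_sub_self v
  have h1 := val_add_one_sub_of_lt v v (by omega)
  have h2 := val_add_one_sub_of_lt v (v + 1) (by omega)
  have hv1 : v + 1 ≠ v := add_one_ne_self (by omega) v
  have hv2 : v - 1 ≠ v := fun h => hv1 (by simpa [h] using sub_add_cancel v 1)
  have hv3 : v + 1 ≠ v - 1 := fun h => by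
    rw [eq_sub_iff_add_eq.mp h] at h2
    omega
  rw [card_insert_of_notMem (by simp [hv1.symm, hv2.symm]), card_pair hv3]

open Classical in
theorem card_nonNeighbors_add_interiorDeg (hn : 3 ≤ n) (T : Triangulation n) (v : Fin n) :
    #(nonNeighbors T v) + interiorDeg n T v + 3 = n := by
  have : NeZero n := ⟨by omega⟩
  have hE := T.isTri
  rw [interiorDeg_eq_card]
  set N := univ.filter fun w => {v, w} ∈ T.edges ∧ ¬ IsBoundary n {v, w}
  -- a vertex other than `v` that is joined to `v` is `v ± 1` or an interior neighbour
  have hcompl : univ.filter (fun w => ¬ (w ≠ v ∧ {v, w} ∉ T.edges)) = {v, v + 1, v - 1} ∪ N := by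
    ext w
    have := hE.mem_of_isBoundary (e := {v, w}) (by omega)
    simp only [mem_filter, mem_univ, true_and, mem_union, mem_insert, mem_singleton,
      isBoundary_pair_iff, N] at this ⊢
    tauto
  have hdisj : Disjoint {v, v + 1, v - 1} N := by
    simp only [disjoint_insert_left, disjoint_singleton_left, mem_filter, mem_univ, true_and,
      isBoundary_pair_iff, not_or, N]
    exact ⟨fun h => hE.ne_of_pair_mem h.1 rfl, by tauto, by tauto⟩
  have := card_filter_add_card_filter_not (s := univ) fun w => w ≠ v ∧ {v, w} ∉ T.edges
  rw [hcompl, card_union_of_disjoint hdisj, card_self_add_one_sub_one hn, card_univ,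
    Fintype.card_fin] at this
  rw [nonNeighbors]
  omega

end Fan

/-- If some vertex of the polygon is incident to exactly `e` interior
edges of `T`, then `d(T,U) ≤ 2n - 6 - e` for every triangulation `U`. -/
theorem stmt0 (n : ℕ) (hn : 3 ≤ n) (T : Triangulation n) (v : Fin n) (e : ℕ)
    (he : interiorDeg n T v = e) (U : Triangulation n) :
    (((flipGraph n).dist T U : ℤ)) ≤ 2 * (n : ℤ) - 6 - (e : ℤ) := by
  obtain ⟨p, hp⟩ := exists_walk_to_fan (by omega) v T
  obtain ⟨q, hq⟩ := exists_walk_to_fan (by omega) v U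
  have hd := (flipGraph n).dist_le (p.append q.reverse)
  rw [SimpleGraph.Walk.length_append, SimpleGraph.Walk.length_reverse] at hd
  have hT := card_nonNeighbors_add_interiorDeg hn T v
  have hU := card_nonNeighbors_add_interiorDeg hn U v
  omega
end

section
/- Let V be a finite totally ordered set. If a subset S of V has cardinality at most (|V| − 3)/2, then there exists x ∈ V∖S and a natural number i such that exactly i elements of S and exactly 2i+1 elements of V are less than x. -/
/- Walking up `V`, the quantity `#{y ∈ V | y < x} - 2 * #{y ∈ S | y < x}` starts at `0`, moves by
`±1` and ends at `#V - 2 * #S ≥ 2`, so at some `x ∉ S` it steps up from `1` to `2`. Inductively: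
delete the maximum `a` of `V`; the hypothesis survives unless `a ∉ S` and `#V = 2 * #S + 2`, and
then `x = a` works. -/

theorem Finset.exists_notMem_card_filter_lt_eq_two_mul_add_one {α : Type*} [LinearOrder α]
    (V S : Finset α) (hS : S ⊆ V) (h : 2 * S.card + 2 ≤ V.card) :
    ∃ x ∈ V, x ∉ S ∧ (V.filter (· < x)).card = 2 * (S.filter (· < x)).card + 1 := by
  induction V using Finset.induction_on_max generalizing S with
  | empty => simp at h
  | insert a V hlt ih =>
    have haV : a ∉ V := fun ha => lt_irrefl a (hlt a ha)
    rw [card_insert_of_notMem haV] at h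
    have hS' : S.erase a ⊆ V := fun y hy => by
      obtain ⟨hya, hyS⟩ := mem_erase.1 hy
      exact (mem_insert.1 (hS hyS)).resolve_left hya
    by_cases hsmall : 2 * (S.erase a).card + 2 ≤ V.card
    · obtain ⟨x, hxV, hxS, hcard⟩ := ih (S.erase a) hS' hsmall
      have hax : ¬ a < x := (hlt x hxV).not_gt
      have hxa : x ≠ a := (hlt x hxV).ne
      refine ⟨x, mem_insert_of_mem hxV, fun hx => hxS (mem_erase.2 ⟨hxa, hx⟩), ?_⟩
      rwa [filter_insert, if_neg hax, ← erase_eq_of_notMem (s := S.filter (· < x))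
        (fun ha => hax (mem_filter.1 ha).2), ← filter_erase]
    · have haS : a ∉ S := fun ha => by
        rw [card_erase_of_mem ha] at hsmall
        have : 0 < S.card := card_pos.2 ⟨a, ha⟩
        omega
      rw [erase_eq_of_notMem haS] at hS' hsmall
      have hVa : V.filter (· < a) = V := filter_true_of_mem hlt
      have hSa : S.filter (· < a) = S := filter_true_of_mem fun y hy => hlt y (hS' hy)
      refine ⟨a, mem_insert_self a V, haS, ?_⟩
      rw [filter_insert, if_neg (lt_irrefl a), hVa, hSa]
      omega

/-- If a subset `S` of a finite totally ordered set `V` has cardinality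
at most `(|V| - 3)/2`, then some `x ∈ V∖S` has exactly `i` elements of `S` and exactly
`2i + 1` elements of `V` less than it. -/
theorem stmt6 {α : Type*} [LinearOrder α] (V S : Finset α) (hS : S ⊆ V)
    (h : 2 * S.card + 3 ≤ V.card) :
    ∃ x ∈ V, x ∉ S ∧ ∃ i : ℕ,
      (S.filter fun y => y < x).card = i ∧
      (V.filter fun y => y < x).card = 2 * i + 1 := by
  obtain ⟨x, hxV, hxS, hcard⟩ :=
    Finset.exists_notMem_card_filter_lt_eq_two_mul_add_one V S hS (by omega)
  exact ⟨x, hxV, hxS, _, rfl, hcard⟩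
end

section
/- Let T be a triangulation of a convex polygon π and let (a,b) be an oriented edge on π such that {a,b} is an edge of T. If (a,b) has length at least 2, then T has an ear in some vertex of π on the left of (a,b). -/
/-!
Induct on the length `m` of `(a,b)`. If `a+1` is not an ear, it lies on an interior edge
`{a+1, d}`. That edge is not a boundary edge, so `d` is neither `a` nor `a+2`, and it does
not cross `{a,b}`, so `d` is `b` or lies on the left of `(a,b)`. Hence `(a+1,d)` is an edge
of `T` of length between `2` and `m-1`, and the induction hypothesis gives an ear strictly
between `a+1` and `d`.
-/

namespace Fin

variable {n : ℕ} [NeZero n] {x p q : Fin n}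

lemma sub_val_eq_of_le (h : (p - x).val ≤ (q - x).val) :
    (q - p).val = (q - x).val - (p - x).val := by
  rw [← sub_sub_sub_cancel_right q p x, Fin.coe_sub_iff_le.mpr h]

lemma sub_val_eq_of_lt (h : (q - x).val < (p - x).val) :
    (q - p).val = n + (q - x).val - (p - x).val := by
  rw [← sub_sub_sub_cancel_right q p x, Fin.coe_sub_iff_lt.mpr h]

lemma val_add_one_sub (h : 2 ≤ n) : (x + 1 - x).val = 1 := by
  rw [add_sub_cancel_left, Fin.val_one', Nat.mod_eq_of_lt h]

end Fin

section Coordinates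

variable {n : ℕ} [NeZero n] {x p q c : Fin n}

lemma between_iff_of_le (h : (p - x).val ≤ (q - x).val) :
    Between n p c q ↔ (p - x).val < (c - x).val ∧ (c - x).val < (q - x).val := by
  unfold Between
  rw [Fin.sub_val_eq_of_le h]
  rcases le_or_gt (p - x).val (c - x).val with hc | hc
  · rw [Fin.sub_val_eq_of_le hc]
    omega
  · rw [Fin.sub_val_eq_of_lt hc]
    have := (q - x).isLt
    omega

lemma isBoundary_of_sub_val_eq_one (h : (q - p).val = 1) : IsBoundary n {p, q} := by
  have hq : q = p + 1 := by
    rw [← sub_eq_iff_eq_add']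
    exact Fin.ext (by rw [h, Fin.val_one', Nat.mod_eq_of_lt (h ▸ (q - p).isLt)])
  refine ⟨p, congrArg _ (Finset.singleton_inj.mpr (Fin.ext ?_))⟩
  rw [hq, nextV, Fin.val_add, Fin.val_one', Nat.add_mod_mod]

lemma cross_of_lt {y : Fin n} (hp : 0 < (p - x).val) (hpy : (p - x).val < (y - x).val)
    (hyq : (y - x).val < (q - x).val) : Cross n {x, y} {p, q} := by
  refine ⟨x, y, p, q, rfl, rfl, ⟨hp, hpy⟩, ?_⟩
  have hx : (x - x).val < (y - x).val := by rw [sub_self]; exact hp.trans hpy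
  unfold Between
  rw [Fin.sub_val_eq_of_le hyq.le, Fin.sub_val_eq_of_lt hx, sub_self]
  have := (q - x).isLt
  simp only [Fin.val_zero]
  omega

end Coordinates

namespace Triangulation

variable {n : ℕ} (T : Triangulation n)

lemma exists_interior_edge_of_not_hasEar {v : Fin n} (h : ¬ HasEar n T v) :
    ∃ d, d ≠ v ∧ ({v, d} : Finset (Fin n)) ∈ T.edges ∧ ¬ IsBoundary n {v, d} := by
  simp only [HasEar, not_forall, not_not] at h
  obtain ⟨e, he, hbd, hv⟩ := h
  obtain ⟨a, b, hab, rfl⟩ := Finset.card_eq_two.mp (T.isTri.2.1 e he)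
  rcases Finset.mem_insert.mp hv with rfl | hv
  · exact ⟨b, hab.symm, he, hbd⟩
  · obtain rfl := Finset.mem_singleton.mp hv
    rw [Finset.pair_comm] at he hbd
    exact ⟨a, hab, he, hbd⟩

theorem exists_hasEar_between {x y : Fin n} (hxy : ({x, y} : Finset (Fin n)) ∈ T.edges)
    (hlen : 2 ≤ (y - x).val) : ∃ c, Between n x c y ∧ HasEar n T c := by
  have : NeZero n := NeZero.of_pos x.pos
  induction hm : (y - x).val using Nat.strong_induction_on generalizing x y with
  | _ m ih =>
  have hx1 : (x + 1 - x).val = 1 := Fin.val_add_one_sub (by have := (y - x).isLt; omega)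
  by_cases hear : HasEar n T (x + 1)
  · exact ⟨x + 1, by unfold Between; omega, hear⟩
  obtain ⟨d, hdx, hd, hbd⟩ := T.exists_interior_edge_of_not_hasEar hear
  have hd1 : (d - x).val ≠ 1 := fun h => hdx (sub_left_inj.mp (Fin.ext (h.trans hx1.symm)))
  have hd0 : (d - x).val ≠ 0 := fun h => hbd <| Finset.pair_comm d (x + 1) ▸
    isBoundary_of_sub_val_eq_one (by rw [Fin.sub_val_eq_of_le (x := x) (by omega)]; omega)
  have hd2 : (d - x).val ≠ 2 := fun h => hbd <|
    isBoundary_of_sub_val_eq_one (by rw [Fin.sub_val_eq_of_le (x := x) (by omega)]; omega)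
  have hdm : (d - x).val ≤ m := by
    by_contra h
    exact T.isTri.2.2.1 _ hxy _ hd (cross_of_lt (by omega) (by omega) (by omega))
  have hlen' : (d - (x + 1)).val = (d - x).val - 1 := by
    rw [Fin.sub_val_eq_of_le (x := x) (by omega), hx1]
  obtain ⟨c, hc, hc_ear⟩ := ih _ (by omega) hd (by omega) hlen'
  rw [between_iff_of_le (x := x) (by omega), hx1] at hc
  exact ⟨c, ⟨by omega, by omega⟩, hc_ear⟩

end Triangulation

theorem stmt10_general (n : ℕ) (T : Triangulation n) (a b : Fin n)
    (hab : ({a, b} : Finset (Fin n)) ∈ T.edges)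
    (hlen : 2 ≤ (b - a).val) :
    ∃ c : Fin n, Between n a c b ∧ HasEar n T c :=
  T.exists_hasEar_between hab hlen

/-- If `{a,b}` is an edge of `T` and the oriented edge `(a,b)` has
length at least `2`, then `T` has an ear in a vertex on the left of `(a,b)`. -/
theorem stmt10 (n : ℕ) (hn : 3 ≤ n) (T : Triangulation n) (a b : Fin n)
    (hab : ({a, b} : Finset (Fin n)) ∈ T.edges)
    (hlen : 2 ≤ (b - a).val) :
    ∃ c : Fin n, Between n a c b ∧ HasEar n T c :=
  stmt10_general n T a b hab hlen
end
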